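/- arXiv:0906.2995 — 3 statements merged into one kernel-verified Lean document; each statement's English description precedes it below -/
import Mathlib

section
/- Let Γ be a finite alphabet with at least two letters. The space Γ^∞ of finite and infinite words over Γ, equipped with the alphabetic topology (generated by basic open sets of the form uA^∞ for u ∈ Γ* and A ⊆ Γ), is not compact. -/
namespace InfWords

variable {Γ : Type}

/-- Finite and infinite words over `Γ`: `Γ^∞ = Γ* ∪ Γ^ω`. -/
abbrev Word (Γ : Type) := List Γ ⊕ (ℕ → Γ)

/-- Prepend a finite word to a finite or infinite word. -/
def wappend (u : List Γ) : Word Γ → Word Γ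
  | Sum.inl v => Sum.inl (u ++ v)
  | Sum.inr f => Sum.inr fun n => if h : n < u.length then u.get ⟨n, h⟩ else f (n - u.length)

/-- The set of finite words `Γ*` inside `Γ^∞`. -/
def finWords (Γ : Type) : Set (Word Γ) := Set.range Sum.inl

/-- The set of infinite words `Γ^ω` inside `Γ^∞`. -/
def infWords (Γ : Type) : Set (Word Γ) := Set.range Sum.inr

/-- The alphabet of a word: the letters occurring in it. -/
def alph : Word Γ → Set Γ
  | Sum.inl u => {a | a ∈ u}
  | Sum.inr f => {a | ∃ n, f n = a}

/-- The imaginary part: letters occurring infinitely often. -/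
def im : Word Γ → Set Γ
  | Sum.inl _ => ∅
  | Sum.inr f => {a | ∀ n, ∃ m, n ≤ m ∧ f m = a}

/-- `A^∞`: words all of whose letters lie in `A`. -/
def infin (A : Set Γ) : Set (Word Γ) := {α | alph α ⊆ A}

/-- The basic set `u A^∞` of the alphabetic topology. -/
def cone (u : List Γ) (A : Set Γ) : Set (Word Γ) := wappend u '' infin A

/-- The alphabetic topology on `Γ^∞`, generated by the sets `u A^∞`. -/
instance alphTop : TopologicalSpace (Word Γ) :=
  TopologicalSpace.generateFrom {S | ∃ u A, S = cone u A}

/-- `cpx A`: words with `alph = im = A`. -/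
def cpx (A : Set Γ) : Set (Word Γ) := {β | alph β = A ∧ im β = A}

/-- The strict alphabetic topology, generated by the sets `u · cpx A`. -/
def strictTopo (Γ : Type) : TopologicalSpace (Word Γ) :=
  TopologicalSpace.generateFrom {S | ∃ u A, S = wappend u '' cpx A}

/-- `u` is a finite prefix of the word `α`. -/
def IsPre (u : List Γ) : Word Γ → Prop
  | Sum.inl v => u <+: v
  | Sum.inr f => ∀ i : Fin u.length, u.get i = f i.1

/-- The arrow language `→W`: every prefix extends to a prefix lying in `W`. -/
def arrow (W : Set (List Γ)) : Set (Word Γ) :=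
  {α | ∀ u, IsPre u α → ∃ v, IsPre (u ++ v) α ∧ u ++ v ∈ W}

/-- The right quotient `L / A^∞`. -/
def quotInf (L : Set (Word Γ)) (A : Set Γ) : Set (List Γ) :=
  {u | ∃ β ∈ infin A, wappend u β ∈ L}

/-- `A^im`: words whose set of letters occurring infinitely often is exactly `A`. -/
def imSet (A : Set Γ) : Set (Word Γ) := {α | im α = A}

/-- `z^ω`, with the convention `1^ω = 1`. -/
def omegaPow : List Γ → Word Γ
  | [] => Sum.inl []
  | a :: l => Sum.inr fun n => (a :: l).get ⟨n % (a :: l).length, Nat.mod_lt n (Nat.succ_pos _)⟩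

/-- The partial products `u v₀ v₁ ⋯ v_{n-1}`. -/
def partialProd (u : List Γ) (v : ℕ → List Γ) (n : ℕ) : List Γ :=
  u ++ ((List.range n).map v).flatten

/-- `α` is the (finite or infinite) product `u v₀ v₁ v₂ ⋯`, with convention `1^ω = 1`. -/
def IsInfProd (u : List Γ) (v : ℕ → List Γ) : Word Γ → Prop
  | Sum.inl w => (∀ n, partialProd u v n <+: w) ∧ ∃ n, partialProd u v n = w
  | Sum.inr f => (∀ n, IsPre (partialProd u v n) (Sum.inr f)) ∧
      ∀ k, ∃ n, k < (partialProd u v n).length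

/-- `h : Γ* → M` is a monoid homomorphism. -/
structure IsHom {M : Type} [Monoid M] (h : List Γ → M) : Prop where
  map_one : h [] = 1
  map_mul : ∀ u v, h (u ++ v) = h u * h v

/-- `[s][e]^ω`: products `u v₀ v₁ ⋯` with `h u = s` and `h vᵢ = e`. -/
def pairSet {M : Type} (h : List Γ → M) (s e : M) : Set (Word Γ) :=
  {α | ∃ u v, h u = s ∧ (∀ i, h (v i) = e) ∧ IsInfProd u v α}

/-- `(s, e)` is a linked pair. -/
def LinkedPair {M : Type} [Monoid M] (s e : M) : Prop := s * e = s ∧ e * e = e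

/-- `h` strongly recognizes `L`. -/
def StronglyRecognizes {M : Type} [Monoid M] (h : List Γ → M) (L : Set (Word Γ)) : Prop :=
  L = ⋃ (s : M) (e : M) (_ : LinkedPair s e ∧ (pairSet h s e ∩ L).Nonempty), pairSet h s e

/-- `L` is regular: strongly recognized by a surjective homomorphism onto a finite monoid. -/
def Regular (L : Set (Word Γ)) : Prop :=
  ∃ (M : Type) (i : Monoid M), Finite M ∧
    ∃ h : List Γ → M, @IsHom Γ M i h ∧ Function.Surjective h ∧ @StronglyRecognizes Γ M i h L

/-- `L` is deterministic. -/
def Deterministic (L : Set (Word Γ)) : Prop :=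
  Regular L ∧ ∃ W : Set (List Γ), L ∩ infWords Γ = arrow W ∩ infWords Γ

/-- The syntactic preorder `u ≤_L v`. -/
def synLe (L : Set (Word Γ)) (u v : List Γ) : Prop :=
  ∀ x y z : List Γ,
    (wappend (x ++ v ++ y) (omegaPow z) ∈ L → wappend (x ++ u ++ y) (omegaPow z) ∈ L) ∧
    (wappend x (omegaPow (v ++ y)) ∈ L → wappend x (omegaPow (u ++ y)) ∈ L)

/-- The syntactic congruence `u ≡_L v`. -/
def synEq (L : Set (Word Γ)) (u v : List Γ) : Prop := synLe L u v ∧ synLe L v u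

/-- `[s][e]^ω` for syntactic classes represented by words `s`, `e`. -/
def pairSetSyn (L : Set (Word Γ)) (s e : List Γ) : Set (Word Γ) :=
  {α | ∃ u v, synEq L u s ∧ (∀ i, synEq L (v i) e) ∧ IsInfProd u v α}

/-- `s` represents an element of `M_e` in the syntactic monoid of `L`:
`s` is a product of words each of which is a factor of (something equivalent to) `e`. -/
def InMe (L : Set (Word Γ)) (e s : List Γ) : Prop :=
  ∃ parts : List (List Γ), s = parts.flatten ∧ ∀ p ∈ parts, ∃ x y, synEq L (x ++ p ++ y) e

/-- Glue a factorization `u₁ a₁ u₂ a₂ ⋯ u_k a_k` into a single finite word. -/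
def glue : List (List Γ) → List (Set Γ × Γ) → List Γ
  | x :: xs, p :: l => x ++ p.2 :: glue xs l
  | _, _ => []

/-- `(us, β)` is a factorization of `α` as `u₁ a₁ ⋯ u_k a_k β` with `uᵢ ∈ Aᵢ*`, `β ∈ B^∞`. -/
def IsFactorization (l : List (Set Γ × Γ)) (B : Set Γ) (us : List (List Γ)) (β : Word Γ)
    (α : Word Γ) : Prop :=
  us.length = l.length ∧
  (∀ (i : ℕ) (h1 : i < us.length) (h2 : i < l.length),
    ∀ c ∈ us.get ⟨i, h1⟩, c ∈ (l.get ⟨i, h2⟩).1) ∧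
  β ∈ infin B ∧ α = wappend (glue us l) β

/-- The monomial `A₁* a₁ ⋯ A_k* a_k B^∞`. -/
def monomial (l : List (Set Γ × Γ)) (B : Set Γ) : Set (Word Γ) :=
  {α | ∃ us β, IsFactorization l B us β α}

/-- The monomial given by `(l, B)` is unambiguous. -/
def Unambiguous (l : List (Set Γ × Γ)) (B : Set Γ) : Prop :=
  ∀ α us β us' β', IsFactorization l B us β α → IsFactorization l B us' β' α →
    us = us' ∧ β = β'

/-- `L` is a polynomial: a finite union of monomials. -/
def IsPolynomial (L : Set (Word Γ)) : Prop :=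
  ∃ ms : List (List (Set Γ × Γ) × Set Γ), L = {α | ∃ m ∈ ms, α ∈ monomial m.1 m.2}

/-- The set of marker letters of a monomial. -/
def sndSet (l : List (Set Γ × Γ)) : Set Γ := {a | ∃ p ∈ l, p.2 = a}

/-- `M_e`: the submonoid generated by the factors of the idempotent `e`. -/
def Msub {M : Type} [Monoid M] (e : M) : Submonoid M :=
  Submonoid.closure {t | ∃ x y, x * t * y = e}

/-- The variety `DA`: `ese = e` for all idempotents `e` and all `s ∈ M_e`. -/
def IsDA (M : Type) [Monoid M] : Prop :=
  ∀ e : M, e * e = e → ∀ s ∈ Msub e, e * s * e = e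

end InfWords

/-!
The words `aⁿb` (`a ≠ b`) form an infinite locally finite family of points. A finite word `u`
is isolated, since `u ∅^∞ = {u}`; the word `a^ω` has the neighbourhood `{a}^∞`, which contains
no `aⁿb`; any other infinite word has a letter `≠ a` at some position `m`, and the cone `u Γ^∞`
on its prefix `u` of length `m + 1` contains `aⁿb` only for `n = m`. In a compact space a locally
finite family of nonempty sets is finite.
-/

namespace InfWords

variable {Γ : Type}

lemma isOpen_cone (u : List Γ) (A : Set Γ) : IsOpen (cone u A) :=
  TopologicalSpace.isOpen_generateFrom_of_mem ⟨u, A, rfl⟩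

lemma inl_mem_cone_iff {u w : List Γ} {A : Set Γ} :
    (Sum.inl w : Word Γ) ∈ cone u A ↔ ∃ v, w = u ++ v ∧ ∀ x ∈ v, x ∈ A := by
  constructor
  · rintro ⟨β | f, hβA, hβ⟩
    · exact ⟨β, by simpa [wappend] using hβ.symm, fun x hx => hβA hx⟩
    · simp [wappend] at hβ
  · rintro ⟨v, rfl, hv⟩
    exact ⟨Sum.inl v, hv, rfl⟩

lemma cone_empty (u : List Γ) : cone u (∅ : Set Γ) = {Sum.inl u} := by
  ext (w | f)
  · simp only [inl_mem_cone_iff, Set.mem_singleton_iff, Sum.inl.injEq]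
    constructor
    · rintro ⟨v, rfl, hv⟩
      simp [List.eq_nil_iff_forall_not_mem.mpr hv]
    · rintro rfl
      exact ⟨[], by simp, by simp⟩
  · simp only [Set.mem_singleton_iff, reduceCtorEq, iff_false]
    rintro ⟨β | g, hβ, h⟩
    · simp [wappend] at h
    · exact hβ ⟨0, rfl⟩

lemma isOpen_singleton_inl (u : List Γ) : IsOpen {(Sum.inl u : Word Γ)} :=
  cone_empty u ▸ isOpen_cone u ∅

lemma inr_mem_cone_nil {f : ℕ → Γ} {A : Set Γ} (hf : ∀ n, f n ∈ A) :
    (Sum.inr f : Word Γ) ∈ cone [] A :=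
  ⟨Sum.inr f, by rintro _ ⟨n, rfl⟩; exact hf n, by simp [wappend]⟩

lemma inr_mem_cone_ofFn (f : ℕ → Γ) (k : ℕ) :
    (Sum.inr f : Word Γ) ∈ cone (List.ofFn fun i : Fin k => f i) Set.univ := by
  refine ⟨Sum.inr fun n => f (n + k), fun _ _ => trivial, ?_⟩
  simp only [wappend, Sum.inr.injEq]
  funext n
  split_ifs with h
  · simp
  · simp only [List.length_ofFn, not_lt] at h
    simp [Nat.sub_add_cancel h]

lemma eq_of_replicate_append_eq_ofFn_append {a b : Γ} {f : ℕ → Γ} {m n : ℕ} {v : List Γ}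
    (hm : f m ≠ a) (h : List.replicate n a ++ [b] = List.ofFn (fun i : Fin (m + 1) => f i) ++ v) :
    n = m := by
  have hmn : m ≤ n := by
    have := congrArg List.length h
    simp only [List.length_append, List.length_replicate, List.length_ofFn,
      List.length_singleton] at this
    omega
  by_contra hne
  have hlt : m < n := lt_of_le_of_ne hmn (Ne.symm hne)
  have := congrArg (·[m]?) h
  simp [List.getElem?_append_left, hlt, -List.ofFn_succ] at this
  exact hm this.symm

lemma locallyFinite_replicate_append {a b : Γ} (hab : a ≠ b) :
    LocallyFinite fun n : ℕ => ({Sum.inl (List.replicate n a ++ [b])} : Set (Word Γ)) := by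
  rintro (w | f)
  · refine ⟨_, (isOpen_singleton_inl w).mem_nhds rfl,
      (Set.finite_singleton (w.length - 1)).subset ?_⟩
    rintro n ⟨_, rfl, h⟩
    simp only [Set.mem_singleton_iff, Sum.inl.injEq] at h
    simp [← h]
  by_cases hconst : ∀ m, f m = a
  · refine ⟨_, (isOpen_cone [] {a}).mem_nhds (inr_mem_cone_nil hconst),
      Set.finite_empty.subset ?_⟩
    rintro n ⟨_, rfl, hn⟩
    obtain ⟨v, hv, hvA⟩ := inl_mem_cone_iff.mp hn
    exact hab (hvA b (by rw [← List.nil_append v, ← hv]; simp)).symm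
  push Not at hconst
  obtain ⟨m, hm⟩ := hconst
  refine ⟨_, (isOpen_cone _ _).mem_nhds (inr_mem_cone_ofFn f (m + 1)),
    (Set.finite_singleton m).subset ?_⟩
  rintro n ⟨_, rfl, hn⟩
  obtain ⟨v, hv, -⟩ := inl_mem_cone_iff.mp hn
  exact eq_of_replicate_append_eq_ofFn_append hm hv

end InfWords

theorem gamma_infty_not_compact (Γ : Type) [Fintype Γ]
    (hcard : 2 ≤ Fintype.card Γ) :
    ¬ CompactSpace (InfWords.Word Γ) := by
  intro
  obtain ⟨a, b, hab⟩ := Fintype.exists_pair_of_one_lt_card hcard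
  exact Set.infinite_univ <| (InfWords.locallyFinite_replicate_append hab).finite_of_compact
    fun _ => Set.singleton_nonempty _
end

section
/- For any language L ⊆ Γ^∞, its closure in the alphabetic topology satisfies closure(L) = ⋃_{A ⊆ Γ} (→(L/A^∞) ∩ A^im), where L/A^∞ = {u ∈ Γ* : uα ∈ L for some α ∈ A^∞} and →W = {α ∈ Γ^∞ : every prefix u of α extends to a prefix uv of α with uv ∈ W}. -/
/-!
A word `α` lies in the closure of `L` iff every basic neighbourhood `u B^∞` of `α` meets `L`.
The smallest such neighbourhoods around a prefix `u` are `u v (im α)^∞` for long enough `v`,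
since past some position only letters of `im α` occur (the alphabet is finite). Hence `α` is in
the closure iff arbitrarily long prefixes of `α` lie in `L / (im α)^∞`, i.e.
`α ∈ →(L / (im α)^∞)`. Conversely, any `u B^∞ ∋ α` contains every `u v (im α)^∞` with `u v` a
prefix of `α`, because `B` contains all letters of the tail of `α` after `u`.
-/

namespace InfWords

open Filter

variable {Γ : Type}

lemma wappend_nil (α : Word Γ) : wappend [] α = α := by
  cases α <;> simp [wappend]

lemma wappend_append (u v : List Γ) (α : Word Γ) :
    wappend (u ++ v) α = wappend u (wappend v α) := by
  cases α with
  | inl w => simp [wappend]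
  | inr f =>
    simp only [wappend, Sum.inr.injEq, List.length_append, List.get_eq_getElem]
    funext n
    by_cases hu : n < u.length
    · simp [hu, List.getElem_append_left hu, show n < u.length + v.length by omega]
    · by_cases huv : n < u.length + v.length
      · simp [hu, huv, List.getElem_append_right (not_lt.1 hu),
          show n - u.length < v.length by omega]
      · simp [hu, huv, show ¬n - u.length < v.length by omega, Nat.sub_add_eq]

lemma wappend_injective (u : List Γ) : Function.Injective (wappend u : Word Γ → Word Γ) := by
  intro α β h
  cases α <;> cases β <;> simp only [wappend, Sum.inl.injEq, Sum.inr.injEq, reduceCtorEq,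
    List.append_cancel_left_eq] at h
  · rw [h]
  · congr 1
    funext n
    simpa using congrFun h (n + u.length)

lemma inr_eq_wappend_ofFn (f : ℕ → Γ) (N : ℕ) :
    (Sum.inr f : Word Γ) =
      wappend (List.ofFn fun i : Fin N => f i) (Sum.inr fun n => f (n + N)) := by
  simp only [wappend, Sum.inr.injEq, List.length_ofFn]
  funext n
  by_cases h : n < N
  · simp [h]
  · simp [h, Nat.sub_add_cancel (not_lt.1 h)]

lemma alph_wappend (u : List Γ) (α : Word Γ) :
    alph (wappend u α) = {a | a ∈ u} ∪ alph α := by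
  cases α with
  | inl v => ext a; simp [wappend, alph]
  | inr f =>
    ext a
    simp only [wappend, alph, Set.mem_union, Set.mem_ofPred_eq]
    constructor
    · rintro ⟨n, rfl⟩
      by_cases h : n < u.length
      · exact Or.inl (by simp [h])
      · exact Or.inr ⟨n - u.length, by simp [h]⟩
    · rintro (h | ⟨n, rfl⟩)
      · obtain ⟨i, rfl⟩ := List.mem_iff_get.1 h
        exact ⟨i, by simp⟩
      · exact ⟨n + u.length, by simp⟩

lemma im_wappend (u : List Γ) (α : Word Γ) : im (wappend u α) = im α := by
  cases α with
  | inl v => rfl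
  | inr f =>
    ext a
    simp only [wappend, im, Set.mem_ofPred_eq]
    constructor
    · intro h n
      obtain ⟨m, hm, rfl⟩ := h (n + u.length)
      exact ⟨m - u.length, by omega, by simp [show ¬m < u.length by omega]⟩
    · intro h n
      obtain ⟨m, hm, rfl⟩ := h n
      exact ⟨m + u.length, by omega, by simp⟩

lemma im_subset_alph (α : Word Γ) : im α ⊆ alph α := by
  cases α with
  | inl v => simp [im]
  | inr f =>
    intro a h
    obtain ⟨m, -, hm⟩ := h 0
    exact ⟨m, hm⟩

lemma eventually_mem_im [Finite Γ] (f : ℕ → Γ) :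
    ∀ᶠ n in atTop, f n ∈ im (Sum.inr f : Word Γ) := by
  have hfin : ∀ a, ∀ᶠ n in atTop, a ∉ im (Sum.inr f : Word Γ) → f n ≠ a := by
    intro a
    by_cases ha : a ∈ im (Sum.inr f : Word Γ)
    · exact .of_forall fun _ h => (h ha).elim
    · have : ¬∃ᶠ n in atTop, f n = a := frequently_atTop.not.2 ha
      exact (not_frequently.1 this).mono fun _ hn _ => hn
  filter_upwards [eventually_all.2 hfin] with n hn
  by_contra h
  exact hn (f n) h rfl

lemma isPre_wappend (u : List Γ) (α : Word Γ) : IsPre u (wappend u α) := by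
  cases α with
  | inl v => exact ⟨v, rfl⟩
  | inr f => intro i; simp

lemma IsPre.of_append_wappend {u v : List Γ} {α : Word Γ} (h : IsPre (u ++ v) (wappend u α)) :
    IsPre v α := by
  cases α with
  | inl w => exact (List.prefix_append_right_inj u).1 h
  | inr f =>
    intro i
    have := h ⟨u.length + i, by simp⟩
    simp only [List.get_eq_getElem] at this ⊢
    simpa [List.getElem_append_right] using this

lemma IsPre.prefix_of_length_le {u v : List Γ} {α : Word Γ} (hu : IsPre u α) (hv : IsPre v α)
    (h : u.length ≤ v.length) : u <+: v := by
  cases α with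
  | inl w => exact List.prefix_of_prefix_length_le hu hv h
  | inr f =>
    have huv : v.take u.length = u := by
      apply List.ext_getElem (by simp [h])
      intro i h1 h2
      have e1 := hu ⟨i, h2⟩
      have e2 := hv ⟨i, by omega⟩
      simp only [List.get_eq_getElem] at e1 e2
      simp [e1, e2]
    exact huv ▸ List.take_prefix _ _

lemma IsPre.subset_alph {u : List Γ} {α : Word Γ} (h : IsPre u α) :
    {a | a ∈ u} ⊆ alph α := by
  cases α with
  | inl v => exact fun _ ha => h.subset ha
  | inr f =>
    intro a ha
    obtain ⟨i, rfl⟩ := List.mem_iff_get.1 ha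
    exact ⟨i, (h i).symm⟩

lemma isPre_of_mem_cone {u : List Γ} {A : Set Γ} {α : Word Γ} (h : α ∈ cone u A) :
    IsPre u α := by
  obtain ⟨β, -, rfl⟩ := h
  exact isPre_wappend u β

lemma cone_mono (u : List Γ) {A B : Set Γ} (h : A ⊆ B) : cone u A ⊆ cone u B :=
  Set.image_mono fun _ hα => hα.trans h

lemma cone_append_subset {u w : List Γ} {A : Set Γ} (hw : {a | a ∈ w} ⊆ A) :
    cone (u ++ w) A ⊆ cone u A := by
  rintro _ ⟨β, hβ, rfl⟩
  refine ⟨wappend w β, ?_, (wappend_append u w β).symm⟩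
  show alph (wappend w β) ⊆ A
  rw [alph_wappend]
  exact Set.union_subset hw hβ

lemma mem_cone_inter_subset_of_length_le {u u' : List Γ} {B B' : Set Γ} {α : Word Γ}
    (hα : α ∈ cone u B) (hα' : α ∈ cone u' B') (hle : u.length ≤ u'.length) :
    α ∈ cone u' (B ∩ B') ∧ cone u' (B ∩ B') ⊆ cone u B ∩ cone u' B' := by
  obtain ⟨w, rfl⟩ := (isPre_of_mem_cone hα).prefix_of_length_le (isPre_of_mem_cone hα') hle
  obtain ⟨β, hβ, rfl⟩ := hα
  obtain ⟨β', hβ', heq⟩ := hα'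
  have hβ_eq : β = wappend w β' := wappend_injective u (by rw [← heq, wappend_append])
  have hβ_alph : {a | a ∈ w} ∪ alph β' ⊆ B := by
    rw [← alph_wappend, ← hβ_eq]; exact hβ
  refine ⟨⟨β', Set.subset_inter (Set.subset_union_right.trans hβ_alph) hβ', heq⟩, ?_⟩
  exact Set.subset_inter
    ((cone_mono _ Set.inter_subset_left).trans
      (cone_append_subset (Set.subset_union_left.trans hβ_alph)))
    (cone_mono _ Set.inter_subset_right)

lemma isTopologicalBasis_cone :
    TopologicalSpace.IsTopologicalBasis {S : Set (Word Γ) | ∃ u A, S = cone u A} := by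
  refine ⟨?_, ?_, rfl⟩
  · rintro _ ⟨u, B, rfl⟩ _ ⟨u', B', rfl⟩ α ⟨hα, hα'⟩
    rcases le_total u.length u'.length with hle | hle
    · obtain ⟨h1, h2⟩ := mem_cone_inter_subset_of_length_le hα hα' hle
      exact ⟨_, ⟨u', B ∩ B', rfl⟩, h1, h2⟩
    · obtain ⟨h1, h2⟩ := mem_cone_inter_subset_of_length_le hα' hα hle
      exact ⟨_, ⟨u, B' ∩ B, rfl⟩, h1, h2.trans (Set.inter_comm _ _).subset⟩
  · refine Set.eq_univ_of_forall fun α => ⟨cone [] Set.univ, ⟨[], Set.univ, rfl⟩, ?_⟩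
    exact ⟨α, Set.subset_univ _, wappend_nil α⟩

lemma mem_closure_iff_cone {L : Set (Word Γ)} {α : Word Γ} :
    α ∈ closure L ↔ ∀ u A, α ∈ cone u A → (cone u A ∩ L).Nonempty := by
  rw [isTopologicalBasis_cone.mem_closure_iff]
  exact ⟨fun h u A => h _ ⟨u, A, rfl⟩, by rintro h _ ⟨u, A, rfl⟩; exact h u A⟩

lemma exists_append_mem_cone_im [Finite Γ] {u : List Γ} {α : Word Γ} (hu : IsPre u α) :
    ∃ v, α ∈ cone (u ++ v) (im α) := by
  cases α with
  | inl w =>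
    obtain ⟨v, rfl⟩ := hu
    exact ⟨v, Sum.inl [], by simp [infin, alph], by simp [wappend]⟩
  | inr f =>
    obtain ⟨N, hN⟩ := eventually_atTop.1 (eventually_mem_im f)
    set M := max N u.length
    have hf := inr_eq_wappend_ofFn f M
    obtain ⟨v, hv⟩ := hu.prefix_of_length_le (hf ▸ isPre_wappend _ _) (by simp [M])
    refine ⟨v, _, ?_, by rw [hv, ← hf]⟩
    rintro _ ⟨n, rfl⟩
    exact hN _ (by omega)

lemma mem_arrow_of_mem_closure [Finite Γ] {L : Set (Word Γ)} {α : Word Γ}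
    (h : α ∈ closure L) :
    α ∈ arrow (quotInf L (im α)) := by
  intro u hu
  obtain ⟨v, hv⟩ := exists_append_mem_cone_im hu
  obtain ⟨_, ⟨β, hβ, rfl⟩, hL⟩ := mem_closure_iff_cone.1 h _ _ hv
  exact ⟨v, isPre_of_mem_cone hv, β, hβ, hL⟩

lemma mem_closure_of_mem_arrow {L : Set (Word Γ)} {α : Word Γ}
    (h : α ∈ arrow (quotInf L (im α))) : α ∈ closure L := by
  refine mem_closure_iff_cone.2 ?_
  rintro u B ⟨β, hβ, rfl⟩
  obtain ⟨v, hv, δ, hδ, hL⟩ := h u (isPre_wappend u β)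
  refine ⟨_, ⟨wappend v δ, ?_, (wappend_append u v δ).symm⟩, hL⟩
  show alph (wappend v δ) ⊆ B
  rw [im_wappend] at hδ
  rw [alph_wappend]
  exact Set.union_subset (hv.of_append_wappend.subset_alph.trans hβ)
    ((hδ.trans (im_subset_alph β)).trans hβ)

end InfWords

theorem closure_eq_arrow_quot (Γ : Type) [Fintype Γ] (L : Set (InfWords.Word Γ)) :
    closure L =
      ⋃ (A : Set Γ), (InfWords.arrow (InfWords.quotInf L A) ∩ InfWords.imSet A) := by
  ext α
  simp only [Set.mem_iUnion, Set.mem_inter_iff, InfWords.imSet, Set.mem_ofPred_eq,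
    exists_eq_right']
  exact ⟨InfWords.mem_arrow_of_mem_closure, InfWords.mem_closure_of_mem_arrow⟩
end

section
/- Let M be a finite monoid generated by a set Γ. If for every idempotent e ∈ M and every generator a ∈ Γ with e ∈ MaM one has eae = e, then for every idempotent e ∈ M and every s ∈ M_e one has ese = e (i.e., M ∈ DA). Here M_e is the submonoid of M generated by {t ∈ M : e ∈ MtM}. -/
/-!
If a product `u v` is a factor of `e`, so are `u` and `v`. Writing a factor of `e` as a product of
generators, every generator occurring is a factor of `e`, so `M_e` is generated by the generators
that are factors of `e`. For a product `t` of such generators, `e t e = e` follows by induction on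
the product: if `e u e = e`, then `g = e u` is again idempotent, every factor of `e` is a factor
of `g`, and `e (u v) e = g v g e = g e = e` once the induction hypothesis gives `g v g = g`.
-/
namespace InfWords

variable {M : Type} [Monoid M]

/-- `Msub e` is, by definition, `Submonoid.closure (factors e)`. -/
def factors (e : M) : Set M := {t | ∃ x y, x * t * y = e}

theorem mem_closure_inter_factors {Γ : Set M} {e t : M} (ht : t ∈ Submonoid.closure Γ)
    (hte : t ∈ factors e) : t ∈ Submonoid.closure (Γ ∩ factors e) := by
  induction ht using Submonoid.closure_induction generalizing e with
  | mem a ha => exact Submonoid.subset_closure ⟨ha, hte⟩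
  | one => exact Submonoid.one_mem _
  | mul u v _ _ ihu ihv =>
    obtain ⟨x, y, hxy⟩ := hte
    have hu : u ∈ factors e := ⟨x, v * y, by simpa only [mul_assoc] using hxy⟩
    have hv : v ∈ factors e := ⟨x * u, y, by simpa only [mul_assoc] using hxy⟩
    exact Submonoid.mul_mem _ (ihu hu) (ihv hv)

theorem Msub_le_closure_inter_factors {Γ : Set M} (hgen : Submonoid.closure Γ = ⊤) (e : M) :
    Msub e ≤ Submonoid.closure (Γ ∩ factors e) :=
  Submonoid.closure_le.2 fun _ hte => mem_closure_inter_factors (by simp [hgen]) hte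

theorem factors_subset_factors_mul {f : M} (hf : IsIdempotentElem f) (u : M) :
    factors f ⊆ factors (f * u) := by
  rintro a ⟨x, y, hxy⟩
  exact ⟨x, y * (f * u), by rw [← mul_assoc, hxy, ← mul_assoc, hf.eq]⟩

theorem isIdempotentElem_mul_of_mul_mul_eq_self {f u : M} (hfu : f * u * f = f) :
    IsIdempotentElem (f * u) := by
  rw [IsIdempotentElem, ← mul_assoc, hfu]

theorem mul_mul_eq_self_of_mem_closure {S : Set M}
    (hS : ∀ f : M, IsIdempotentElem f → ∀ a ∈ S, a ∈ factors f → f * a * f = f)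
    {t : M} (ht : t ∈ Submonoid.closure S) {f : M} (hf : IsIdempotentElem f)
    (hSf : S ⊆ factors f) : f * t * f = f := by
  induction ht using Submonoid.closure_induction generalizing f with
  | mem a ha => exact hS f hf a ha (hSf ha)
  | one => simpa using hf.eq
  | mul u v _ _ ihu ihv =>
    have hfu : f * u * f = f := ihu hf hSf
    have hgv : f * u * v * (f * u) = f * u :=
      ihv (isIdempotentElem_mul_of_mul_mul_eq_self hfu) (hSf.trans (factors_subset_factors_mul hf u))
    calc f * (u * v) * f = f * u * v * (f * u * f) := by rw [hfu]; simp only [mul_assoc]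
      _ = f * u * v * (f * u) * f := by simp only [mul_assoc]
      _ = f := by rw [hgv, hfu]

end InfWords

theorem da_test_on_generators_general (M : Type) [Monoid M] (Γ : Set M)
    (hgen : Submonoid.closure Γ = ⊤)
    (hyp : ∀ e : M, e * e = e → ∀ a ∈ Γ, (∃ x y, x * a * y = e) → e * a * e = e) :
    ∀ e : M, e * e = e → ∀ s ∈ InfWords.Msub e, e * s * e = e := by
  intro e he s hs
  refine InfWords.mul_mul_eq_self_of_mem_closure (S := Γ ∩ InfWords.factors e) ?_
    (InfWords.Msub_le_closure_inter_factors hgen e hs) he Set.inter_subset_right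
  exact fun f hf a ha haf => hyp f hf a ha.1 haf

theorem da_test_on_generators (M : Type) [Monoid M] [Finite M] (Γ : Set M)
    (hgen : Submonoid.closure Γ = ⊤)
    (hyp : ∀ e : M, e * e = e → ∀ a ∈ Γ, (∃ x y, x * a * y = e) → e * a * e = e) :
    ∀ e : M, e * e = e → ∀ s ∈ InfWords.Msub e, e * s * e = e :=
  da_test_on_generators_general M Γ hgen hyp
end
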